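/- arXiv:2011.10984 — 2 statements merged into one kernel-verified Lean document; each statement's English description precedes it below -/
import Mathlib

section
/- No simple cycle Cₙ (n ≥ 1) can be obtained as the result of a nontrivial gluing operation applied to two graphs each isomorphic to a simple cycle Cₘ with m < n or to any graphs that are themselves built from smaller cycles; consequently, for any set S of positive integers, the cycles {Cₙ : n ∈ S} form the elemental basis of the closed class they generate. In particular, distinct subsets S yield distinct closed classes. -/
/-- A finite multigraph: vertices, edges, and an endpoint map assigning to each
edge an unordered pair of vertices (loops and parallel edges allowed). -/
structure MultiGraph where
  V : Type
  E : Type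
  [fintV : Fintype V]
  [fintE : Fintype E]
  [decV : DecidableEq V]
  ends : E → Sym2 V

attribute [instance] MultiGraph.fintV MultiGraph.fintE MultiGraph.decV

/-- An embedding of the multigraph `G` into the multigraph `H` (a subgraph copy). -/
structure Emb (G H : MultiGraph) where
  vmap : G.V → H.V
  emap : G.E → H.E
  vinj : Function.Injective vmap
  einj : Function.Injective emap
  ends_eq : ∀ e, H.ends (emap e) = (G.ends e).map vmap

/-- An isomorphism of multigraphs. -/
structure Iso (G H : MultiGraph) extends Emb G H where
  vsurj : Function.Surjective vmap
  esurj : Function.Surjective emap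

/-- `GlueAt G G₁ G₂ Gt j₁ j₂ f₁ f₂` says that `G` is the result of a gluing
operation applied to `G₁` and `G₂`, identifying the copy `j₁` of `Gt` inside `G₁`
with the copy `j₂` of `Gt` inside `G₂`: `f₁`, `f₂` embed the operands into the
result, they agree exactly on the identified subgraph, and together they cover `G`. -/
def GlueAt (G G₁ G₂ Gt : MultiGraph) (j₁ : Emb Gt G₁) (j₂ : Emb Gt G₂)
    (f₁ : Emb G₁ G) (f₂ : Emb G₂ G) : Prop :=
  (∀ x, f₁.vmap (j₁.vmap x) = f₂.vmap (j₂.vmap x)) ∧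
  (∀ e, f₁.emap (j₁.emap e) = f₂.emap (j₂.emap e)) ∧
  (∀ v, (∃ a, f₁.vmap a = v) ∨ (∃ b, f₂.vmap b = v)) ∧
  (∀ e, (∃ a, f₁.emap a = e) ∨ (∃ b, f₂.emap b = e)) ∧
  (∀ a b, f₁.vmap a = f₂.vmap b → ∃ x, j₁.vmap x = a ∧ j₂.vmap x = b) ∧
  (∀ a b, f₁.emap a = f₂.emap b → ∃ x, j₁.emap x = a ∧ j₂.emap x = b)

/-- `G` is a result of a gluing operation applied to `G₁` and `G₂` with gluing
subgraph `Gt`. -/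
def IsGluing (G G₁ G₂ Gt : MultiGraph) : Prop :=
  ∃ (j₁ : Emb Gt G₁) (j₂ : Emb Gt G₂) (f₁ : Emb G₁ G) (f₂ : Emb G₂ G),
    GlueAt G G₁ G₂ Gt j₁ j₂ f₁ f₂

/-- A nontrivial gluing: neither identified subgraph is the whole operand. -/
def IsNontrivialGluing (G G₁ G₂ Gt : MultiGraph) : Prop :=
  ∃ (j₁ : Emb Gt G₁) (j₂ : Emb Gt G₂) (f₁ : Emb G₁ G) (f₂ : Emb G₂ G),
    GlueAt G G₁ G₂ Gt j₁ j₂ f₁ f₂ ∧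
    ¬ (Function.Surjective j₁.vmap ∧ Function.Surjective j₁.emap) ∧
    ¬ (Function.Surjective j₂.vmap ∧ Function.Surjective j₂.emap)

/-- `O n`: the empty (edgeless) graph on `n` vertices. -/
abbrev O (n : ℕ) : MultiGraph := { V := Fin n, E := Empty, ends := fun e => e.elim }

/-- `K₂`: a single edge on two vertices. -/
abbrev K2 : MultiGraph := { V := Fin 2, E := Fin 1, ends := fun _ => s((0 : Fin 2), (1 : Fin 2)) }

/-- `CycleG n`: the simple cycle on `n` vertices (`CycleG 1` is a loop,
`CycleG 2` a pair of parallel edges). -/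
def CycleG (n : ℕ) : MultiGraph :=
  { V := Fin n, E := Fin n,
    ends := fun e => s(e, ⟨(e.val + 1) % n, Nat.mod_lt _ e.pos⟩) }

/-- `C₁`: a single vertex with a loop. -/
abbrev C1 : MultiGraph := CycleG 1

/-- Number of occurrences of `v` among the two endpoints in an unordered pair. -/
def vcount {α : Type} [DecidableEq α] (v : α) : Sym2 α → ℕ :=
  Sym2.lift ⟨fun a b => (if a = v then 1 else 0) + (if b = v then 1 else 0),
    fun _ _ => add_comm _ _⟩

/-- Degree of a vertex in a multigraph (a loop contributes 2). -/
def MultiGraph.degree (G : MultiGraph) (v : G.V) : ℕ := ∑ e : G.E, vcount v (G.ends e)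

/-- Adjacency in a multigraph. -/
def MultiGraph.Adj (G : MultiGraph) (v w : G.V) : Prop := ∃ e, G.ends e = s(v, w)

/-- Connectivity of a multigraph. -/
def MultiGraph.Connected (G : MultiGraph) : Prop :=
  Nonempty G.V ∧ ∀ v w, Relation.ReflTransGen G.Adj v w

/-- A graph has a cycle iff it contains a subgraph isomorphic to some `CycleG n`,
`n ≥ 1` (this includes loops and pairs of parallel edges). -/
def HasCycle (G : MultiGraph) : Prop := ∃ n, 1 ≤ n ∧ Nonempty (Emb (CycleG n) G)

/-- A Hamiltonian graph: it contains a spanning cycle. -/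
def Hamiltonian (G : MultiGraph) : Prop :=
  ∃ n, 1 ≤ n ∧ ∃ f : Emb (CycleG n) G, Function.Surjective f.vmap

/-- The class of graphs constructible from (isomorphic copies of) graphs in `B`
by gluing operations whose gluing subgraphs lie in `T`. -/
inductive GeneratesW (B T : Set MultiGraph) : MultiGraph → Prop
  | base {H G : MultiGraph} : B H → Iso H G → GeneratesW B T G
  | glue {G G₁ G₂ Gt : MultiGraph} : GeneratesW B T G₁ → GeneratesW B T G₂ →
      T Gt → IsGluing G G₁ G₂ Gt → GeneratesW B T G

/-- The closure of a set of graphs under arbitrary gluing operations. -/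
def Generates (B : Set MultiGraph) : Set MultiGraph := {G | GeneratesW B Set.univ G}

/-- A class of graphs closed under isomorphism. -/
def IsoClosed (C : Set MultiGraph) : Prop := ∀ G H, G ∈ C → Iso G H → H ∈ C

/-- A closed class of graphs: closed under isomorphism and gluing operations. -/
def ClosedClass (C : Set MultiGraph) : Prop :=
  IsoClosed C ∧ ∀ G G₁ G₂ Gt, G₁ ∈ C → G₂ ∈ C → IsGluing G G₁ G₂ Gt → G ∈ C

/-- The set of all graphs isomorphic to a cycle `Cₙ` with `n ∈ S`. -/
def CycleSet (S : Set ℕ) : Set MultiGraph := {G | ∃ n ∈ S, Nonempty (Iso (CycleG n) G)}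

/-- `B` is the elemental basis of the closed class `C`: an inclusion-minimal
complete (isomorphism-closed) generating system for `C`. -/
def ElementalBasis (C B : Set MultiGraph) : Prop :=
  B ⊆ C ∧ IsoClosed B ∧ Generates B = C ∧
    ∀ B' ⊆ B, IsoClosed B' → Generates B' = C → B' = B

/-!
Every graph generated from cycles has minimum degree at least 2. Suppose a connected graph `G`
of maximum degree at most 2 is glued from `G₁` and `G₂` along `Gt`, where `G₂` is nonempty of
minimum degree at least 2. At a glued vertex `deg G + deg Gt = deg G₁ + deg G₂`, which forces
`deg G₁ ≤ deg Gt` there, so the copy of `Gt` in `G₁` carries every edge of `G₁` at its vertices.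
Then the image of `G₂` in `G` is closed under adjacency, hence is all of `G`, and so `Gt` is all
of `G₁`: a cycle only arises from trivial gluings. By induction on the generation, every cycle of
the class generated by an isomorphism-closed basis of such graphs lies in the basis itself.
-/

open Function

section Vcount

variable {α β : Type} [DecidableEq α]

lemma vcount_mk (v a b : α) :
    vcount v s(a, b) = (if a = v then 1 else 0) + (if b = v then 1 else 0) := rfl

lemma vcount_map [DecidableEq β] {f : α → β} (hf : Injective f) (v : α) (z : Sym2 α) :
    vcount (f v) (z.map f) = vcount v z := by
  induction z using Sym2.ind with
  | _ a b => simp [vcount_mk, hf.eq_iff]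

lemma one_le_vcount_of_mem {v : α} {z : Sym2 α} (h : v ∈ z) : 1 ≤ vcount v z := by
  induction z using Sym2.ind with
  | _ a b => rcases Sym2.mem_iff.mp h with rfl | rfl <;> simp [vcount_mk]

end Vcount

namespace Emb

variable {G H K : MultiGraph}

def comp (f : Emb G H) (g : Emb H K) : Emb G K where
  vmap := g.vmap ∘ f.vmap
  emap := g.emap ∘ f.emap
  vinj := g.vinj.comp f.vinj
  einj := g.einj.comp f.einj
  ends_eq e := by simp only [comp_apply, g.ends_eq, f.ends_eq, Sym2.map_map]

lemma sum_vcount_image [DecidableEq H.E] (f : Emb G H) (v : G.V) :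
    ∑ e ∈ Finset.univ.image f.emap, vcount (f.vmap v) (H.ends e) = G.degree v := by
  rw [Finset.sum_image fun a _ b _ h => f.einj h]
  exact Finset.sum_congr rfl fun e _ => by rw [f.ends_eq, vcount_map f.vinj]

lemma degree_le (f : Emb G H) (v : G.V) : G.degree v ≤ H.degree (f.vmap v) := by
  classical
  rw [← f.sum_vcount_image v]
  exact Finset.sum_le_sum_of_subset (Finset.subset_univ _)

lemma adj (f : Emb G H) {a b : G.V} (h : G.Adj a b) : H.Adj (f.vmap a) (f.vmap b) := by
  obtain ⟨e, he⟩ := h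
  exact ⟨f.emap e, by rw [f.ends_eq, he, Sym2.map_mk]⟩

lemma exists_emap_eq_of_degree_le (f : Emb G H) {v : G.V}
    (hv : H.degree (f.vmap v) ≤ G.degree v) {e : H.E} (he : f.vmap v ∈ H.ends e) :
    ∃ e', f.emap e' = e := by
  classical
  by_contra hne
  have hnotin : e ∉ Finset.univ.image f.emap := by simpa using hne
  have hsum : ∑ e ∈ insert e (Finset.univ.image f.emap), vcount (f.vmap v) (H.ends e)
      ≤ H.degree (f.vmap v) :=
    Finset.sum_le_sum_of_subset (Finset.subset_univ _)
  rw [Finset.sum_insert hnotin, f.sum_vcount_image] at hsum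
  have := one_le_vcount_of_mem he
  omega

end Emb

namespace Iso

variable {G H K : MultiGraph}

def refl (G : MultiGraph) : Iso G G :=
  ⟨⟨id, id, injective_id, injective_id, fun e => by simp⟩,
    surjective_id, surjective_id⟩

def comp (f : Iso G H) (g : Iso H K) : Iso G K :=
  ⟨f.toEmb.comp g.toEmb, g.vsurj.comp f.vsurj, g.esurj.comp f.esurj⟩

noncomputable def symm (i : Iso G H) : Iso H G := by
  let ve : G.V ≃ H.V := Equiv.ofBijective i.vmap ⟨i.vinj, i.vsurj⟩
  let ee : G.E ≃ H.E := Equiv.ofBijective i.emap ⟨i.einj, i.esurj⟩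
  refine ⟨⟨ve.symm, ee.symm, ve.symm.injective, ee.symm.injective, fun e => ?_⟩,
    ve.symm.surjective, ee.symm.surjective⟩
  have hends : H.ends e = (G.ends (ee.symm e)).map i.vmap := by
    rw [← i.ends_eq]
    exact congrArg H.ends (ee.apply_symm_apply e).symm
  have hinv : ⇑ve.symm ∘ i.vmap = id := funext ve.symm_apply_apply
  rw [hends, Sym2.map_map, hinv, Sym2.map_id, id_eq]

lemma degree_eq (i : Iso G H) (v : G.V) : H.degree (i.vmap v) = G.degree v := by
  classical
  rw [← i.sum_vcount_image v, Finset.image_univ_of_surjective i.esurj]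
  rfl

lemma connected (i : Iso G H) (h : G.Connected) : H.Connected := by
  obtain ⟨⟨a₀⟩, hpath⟩ := h
  refine ⟨⟨i.vmap a₀⟩, fun v w => ?_⟩
  obtain ⟨a, rfl⟩ := i.vsurj v
  obtain ⟨b, rfl⟩ := i.vsurj w
  exact (hpath a b).lift i.vmap fun _ _ => i.adj

end Iso

lemma MultiGraph.Connected.mem_of_adj_closed {G : MultiGraph} (hG : G.Connected)
    {S : Set G.V} (hS : ∀ v ∈ S, ∀ w, G.Adj v w → w ∈ S) {v : G.V} (hv : v ∈ S) (w : G.V) :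
    w ∈ S := by
  induction hG.2 v w with
  | refl => exact hv
  | tail _ hadj ih => exact hS _ ih _ hadj

section Cycle

lemma cycleG_ends {n : ℕ} [NeZero n] (e : Fin n) : (CycleG n).ends e = s(e, e + 1) := by
  change s(e, (⟨(e.val + 1) % n, _⟩ : Fin n)) = s(e, e + 1)
  congr 1
  ext
  rw [Fin.val_add, Fin.val_one', Nat.add_mod_mod]

lemma cycleG_degree {n : ℕ} (hn : 1 ≤ n) (v : Fin n) : (CycleG n).degree v = 2 := by
  have : NeZero n := ⟨by omega⟩
  have hcount : ∀ e : Fin n, vcount v ((CycleG n).ends e)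
      = (if e = v then 1 else 0) + (if e = v - 1 then 1 else 0) := by
    intro e
    rw [cycleG_ends, vcount_mk]
    simp [eq_sub_iff_add_eq]
  change ∑ e : Fin n, vcount v ((CycleG n).ends e) = 2
  simp [hcount, Finset.sum_add_distrib]

open Fin.NatCast in
lemma cycleG_connected {n : ℕ} (hn : 1 ≤ n) : (CycleG n).Connected := by
  have : NeZero n := ⟨by omega⟩
  have hwalk : ∀ (v : Fin n) (k : ℕ),
      Relation.ReflTransGen (CycleG n).Adj v (v + (k : Fin n)) := by
    intro v k
    induction k with
    | zero => simpa using Relation.ReflTransGen.refl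
    | succ k ih =>
      refine ih.tail ⟨v + (k : Fin n), ?_⟩
      rw [cycleG_ends, Nat.cast_succ, add_assoc]
      rfl
  refine ⟨⟨(0 : Fin n)⟩, fun v w => ?_⟩
  change Fin n at v w
  simpa using hwalk v (w - v).val

lemma eq_of_iso_cycleG {m n : ℕ} (i : Iso (CycleG m) (CycleG n)) : m = n := by
  have hcard : ∀ k, Fintype.card (CycleG k).V = k := Fintype.card_fin
  simpa only [hcard] using Fintype.card_congr (Equiv.ofBijective i.vmap ⟨i.vinj, i.vsurj⟩)

end Cycle

namespace GlueAt

variable {G G₁ G₂ Gt : MultiGraph} {j₁ : Emb Gt G₁} {j₂ : Emb Gt G₂} {f₁ : Emb G₁ G}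
  {f₂ : Emb G₂ G}

lemma symm (h : GlueAt G G₁ G₂ Gt j₁ j₂ f₁ f₂) : GlueAt G G₂ G₁ Gt j₂ j₁ f₂ f₁ := by
  obtain ⟨hv, he, hcovV, hcovE, hsepV, hsepE⟩ := h
  refine ⟨fun x => (hv x).symm, fun e => (he e).symm, fun v => (hcovV v).symm,
    fun e => (hcovE e).symm, fun a b hab => ?_, fun a b hab => ?_⟩
  · obtain ⟨x, h₁, h₂⟩ := hsepV b a hab.symm
    exact ⟨x, h₂, h₁⟩
  · obtain ⟨x, h₁, h₂⟩ := hsepE b a hab.symm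
    exact ⟨x, h₂, h₁⟩

def isoOfSurjective (h : GlueAt G G₁ G₂ Gt j₁ j₂ f₁ f₂) (hv : Surjective j₁.vmap)
    (he : Surjective j₁.emap) : Iso G₂ G := by
  obtain ⟨hv', he', hcovV, hcovE, -, -⟩ := h
  refine ⟨f₂, fun v => ?_, fun e => ?_⟩
  · rcases hcovV v with ⟨a, rfl⟩ | hb
    · obtain ⟨x, rfl⟩ := hv a
      exact ⟨j₂.vmap x, (hv' x).symm⟩
    · exact hb
  · rcases hcovE e with ⟨a, rfl⟩ | hb
    · obtain ⟨x, rfl⟩ := he a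
      exact ⟨j₂.emap x, (he' x).symm⟩
    · exact hb

lemma image_emap_union (h : GlueAt G G₁ G₂ Gt j₁ j₂ f₁ f₂) [DecidableEq G.E] :
    Finset.univ.image f₁.emap ∪ Finset.univ.image f₂.emap = Finset.univ := by
  obtain ⟨-, -, -, hcovE, -, -⟩ := h
  ext e
  simpa using hcovE e

lemma image_emap_inter (h : GlueAt G G₁ G₂ Gt j₁ j₂ f₁ f₂) [DecidableEq G.E] :
    Finset.univ.image f₁.emap ∩ Finset.univ.image f₂.emap
      = Finset.univ.image (j₁.comp f₁).emap := by
  obtain ⟨-, he, -, -, -, hsepE⟩ := h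
  ext e
  simp only [Finset.mem_inter, Finset.mem_image, Finset.mem_univ, true_and]
  constructor
  · rintro ⟨⟨a, rfl⟩, b, hb⟩
    obtain ⟨x, rfl, -⟩ := hsepE a b hb.symm
    exact ⟨x, rfl⟩
  · rintro ⟨x, rfl⟩
    exact ⟨⟨_, rfl⟩, j₂.emap x, (he x).symm⟩

lemma degree_add_degree (h : GlueAt G G₁ G₂ Gt j₁ j₂ f₁ f₂) (x : Gt.V) :
    G.degree (f₁.vmap (j₁.vmap x)) + Gt.degree x
      = G₁.degree (j₁.vmap x) + G₂.degree (j₂.vmap x) := by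
  classical
  have h₂ : ∑ e ∈ Finset.univ.image f₂.emap, vcount (f₁.vmap (j₁.vmap x)) (G.ends e)
      = G₂.degree (j₂.vmap x) := by
    rw [h.1 x]
    exact f₂.sum_vcount_image _
  have hsum := Finset.sum_union_inter (s₁ := Finset.univ.image f₁.emap)
    (s₂ := Finset.univ.image f₂.emap) (f := fun e => vcount (f₁.vmap (j₁.vmap x)) (G.ends e))
  have ht : ∑ e ∈ Finset.univ.image (j₁.comp f₁).emap, vcount (f₁.vmap (j₁.vmap x)) (G.ends e)
      = Gt.degree x :=
    (j₁.comp f₁).sum_vcount_image x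
  rw [h.image_emap_union, h.image_emap_inter, f₁.sum_vcount_image, h₂, ht] at hsum
  exact hsum

lemma adj_closed_range (h : GlueAt G G₁ G₂ Gt j₁ j₂ f₁ f₂)
    (hclosed : ∀ x e, j₂.vmap x ∈ G₂.ends e → ∃ e', j₂.emap e' = e) :
    ∀ v ∈ Set.range f₁.vmap, ∀ w, G.Adj v w → w ∈ Set.range f₁.vmap := by
  obtain ⟨-, he, -, hcovE, hsepV, -⟩ := h
  have ends_mem : ∀ e₁ w, w ∈ G.ends (f₁.emap e₁) → w ∈ Set.range f₁.vmap := by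
    intro e₁ w hw
    rw [f₁.ends_eq] at hw
    obtain ⟨b, -, rfl⟩ := Sym2.mem_map.mp hw
    exact ⟨b, rfl⟩
  rintro _ ⟨a, rfl⟩ w ⟨e, hvw⟩
  have hw : w ∈ G.ends e := hvw ▸ Sym2.mem_mk_right _ _
  rcases hcovE e with ⟨e₁, rfl⟩ | ⟨e₂, rfl⟩
  · exact ends_mem e₁ w hw
  · have ha : f₁.vmap a ∈ (G₂.ends e₂).map f₂.vmap := by
      rw [← f₂.ends_eq, hvw]
      exact Sym2.mem_mk_left _ _
    obtain ⟨b, hb, hba⟩ := Sym2.mem_map.mp ha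
    obtain ⟨x, -, rfl⟩ := hsepV a b hba.symm
    obtain ⟨e', rfl⟩ := hclosed x e₂ hb
    rw [← he e'] at hw
    exact ends_mem _ w hw

lemma surjective_of_connected (h : GlueAt G G₁ G₂ Gt j₁ j₂ f₁ f₂) (hG : G.Connected)
    (hne : Nonempty G₂.V) (hclosed : ∀ x e, j₁.vmap x ∈ G₁.ends e → ∃ e', j₁.emap e' = e) :
    Surjective j₁.vmap ∧ Surjective j₁.emap := by
  obtain ⟨b₀⟩ := hne
  have hrange : ∀ v, v ∈ Set.range f₂.vmap :=
    hG.mem_of_adj_closed (h.symm.adj_closed_range hclosed) ⟨b₀, rfl⟩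
  obtain ⟨-, -, -, -, hsepV, -⟩ := h
  have hv : Surjective j₁.vmap := fun a => by
    obtain ⟨b, hb⟩ := hrange (f₁.vmap a)
    obtain ⟨x, hx, -⟩ := hsepV a b hb.symm
    exact ⟨x, hx⟩
  refine ⟨hv, fun e => ?_⟩
  obtain ⟨x, hx⟩ := hv (G₁.ends e).out.1
  exact hclosed x e (hx ▸ Sym2.out_fst_mem _)

lemma surjective_of_degree_le_two (h : GlueAt G G₁ G₂ Gt j₁ j₂ f₁ f₂) (hG : G.Connected)
    (hdeg : ∀ v, G.degree v ≤ 2) (hdeg₂ : ∀ b, 2 ≤ G₂.degree b) :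
    (Surjective j₁.vmap ∧ Surjective j₁.emap) ∨ (Surjective j₂.vmap ∧ Surjective j₂.emap) := by
  rcases isEmpty_or_nonempty G₂.V with hempty | hne
  · exact Or.inr ⟨fun b => isEmptyElim b, fun e => isEmptyElim (G₂.ends e).out.1⟩
  refine Or.inl (h.surjective_of_connected hG hne fun x e hx => ?_)
  refine j₁.exists_emap_eq_of_degree_le ?_ hx
  have := h.degree_add_degree x
  have := hdeg (f₁.vmap (j₁.vmap x))
  have := hdeg₂ (j₂.vmap x)
  omega

end GlueAt

namespace GeneratesW

variable {B T : Set MultiGraph}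

lemma two_le_degree (hB : ∀ H ∈ B, ∀ v, 2 ≤ H.degree v) {G : MultiGraph}
    (hG : GeneratesW B T G) : ∀ v, 2 ≤ G.degree v := by
  induction hG with
  | base hH i =>
    intro v
    obtain ⟨a, rfl⟩ := i.vsurj v
    rw [i.degree_eq]
    exact hB _ hH a
  | glue _ _ _ hglue ih₁ ih₂ =>
    obtain ⟨-, -, f₁, f₂, -, -, hcovV, -⟩ := hglue
    intro v
    rcases hcovV v with ⟨a, rfl⟩ | ⟨b, rfl⟩
    · exact (ih₁ a).trans (f₁.degree_le a)
    · exact (ih₂ b).trans (f₂.degree_le b)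

lemma mem_of_connected_of_degree_le_two (hBiso : IsoClosed B)
    (hB : ∀ H ∈ B, ∀ v, 2 ≤ H.degree v) {G : MultiGraph} (hG : GeneratesW B T G) :
    G.Connected → (∀ v, G.degree v ≤ 2) → G ∈ B := by
  induction hG with
  | base hH i => exact fun _ _ => hBiso _ _ hH i
  | glue _ h₂ _ hglue ih₁ ih₂ =>
    intro hconn hdeg
    obtain ⟨j₁, j₂, f₁, f₂, hgl⟩ := hglue
    rcases hgl.surjective_of_degree_le_two hconn hdeg (h₂.two_le_degree hB) with
      ⟨hv, he⟩ | ⟨hv, he⟩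
    · let i := hgl.isoOfSurjective hv he
      refine hBiso _ _ (ih₂ (i.symm.connected hconn) fun b => ?_) i
      rw [← i.degree_eq]
      exact hdeg _
    · let i := hgl.symm.isoOfSurjective hv he
      refine hBiso _ _ (ih₁ (i.symm.connected hconn) fun a => ?_) i
      rw [← i.degree_eq]
      exact hdeg _

end GeneratesW

lemma mem_generates {B : Set MultiGraph} {G : MultiGraph} (hG : G ∈ B) : G ∈ Generates B :=
  GeneratesW.base hG (Iso.refl G)

section CycleSet

variable {S : Set ℕ}

lemma cycleSet_isoClosed (S : Set ℕ) : IsoClosed (CycleSet S) := by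
  rintro G H ⟨n, hn, ⟨i⟩⟩ j
  exact ⟨n, hn, ⟨i.comp j⟩⟩

lemma connected_of_mem_cycleSet (hS : ∀ n ∈ S, 1 ≤ n) {G : MultiGraph} (hG : G ∈ CycleSet S) :
    G.Connected := by
  obtain ⟨n, hn, ⟨i⟩⟩ := hG
  exact i.connected (cycleG_connected (hS n hn))

lemma degree_of_mem_cycleSet (hS : ∀ n ∈ S, 1 ≤ n) {G : MultiGraph} (hG : G ∈ CycleSet S)
    (v : G.V) : G.degree v = 2 := by
  obtain ⟨n, hn, ⟨i⟩⟩ := hG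
  obtain ⟨a, rfl⟩ := i.vsurj v
  rw [i.degree_eq]
  exact cycleG_degree (hS n hn) a

lemma mem_of_cycleG_mem_generates (hS : ∀ n ∈ S, 1 ≤ n) {n : ℕ} (hn : 1 ≤ n)
    (h : CycleG n ∈ Generates (CycleSet S)) : n ∈ S := by
  obtain ⟨m, hm, ⟨i⟩⟩ := h.mem_of_connected_of_degree_le_two (cycleSet_isoClosed S)
    (fun _ hH v => (degree_of_mem_cycleSet hS hH v).ge) (cycleG_connected hn)
    fun v => (cycleG_degree hn v).le
  rwa [eq_of_iso_cycleG i] at hm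

end CycleSet

theorem cycles_form_elemental_bases :
    (∀ n, 1 ≤ n → ∀ G₁ G₂ Gt : MultiGraph,
        G₁ ∈ Generates (CycleSet {m | 1 ≤ m ∧ m < n}) →
        G₂ ∈ Generates (CycleSet {m | 1 ≤ m ∧ m < n}) →
        ¬ IsNontrivialGluing (CycleG n) G₁ G₂ Gt) ∧
    (∀ S : Set ℕ, (∀ n ∈ S, 1 ≤ n) →
        ElementalBasis (Generates (CycleSet S)) (CycleSet S)) ∧
    (∀ S T : Set ℕ, (∀ n ∈ S, 1 ≤ n) → (∀ n ∈ T, 1 ≤ n) →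
        Generates (CycleSet S) = Generates (CycleSet T) → S = T) := by
  refine ⟨?_, ?_, ?_⟩
  · rintro n hn G₁ G₂ Gt - hG₂ ⟨j₁, j₂, f₁, f₂, hgl, hj₁, hj₂⟩
    have hdeg₂ := GeneratesW.two_le_degree
      (fun _ hH v => (degree_of_mem_cycleSet (fun _ hm => hm.1) hH v).ge) hG₂
    rcases hgl.surjective_of_degree_le_two (cycleG_connected hn)
      (fun v => (cycleG_degree hn v).le) hdeg₂ with h | h
    exacts [hj₁ h, hj₂ h]
  · refine fun S hS => ⟨fun G => mem_generates, cycleSet_isoClosed S, rfl, ?_⟩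
    refine fun B' hsub hiso hgen => hsub.antisymm fun G hG => ?_
    have hG' : G ∈ Generates B' := hgen ▸ mem_generates hG
    exact hG'.mem_of_connected_of_degree_le_two hiso
      (fun _ hH v => (degree_of_mem_cycleSet hS (hsub hH) v).ge)
      (connected_of_mem_cycleSet hS hG) fun v => (degree_of_mem_cycleSet hS hG v).le
  · refine fun S T hS hT hgen => Set.ext fun n => ⟨fun hn => ?_, fun hn => ?_⟩
    · exact mem_of_cycleG_mem_generates hT (hS n hn) (hgen ▸ mem_generates ⟨n, hn, ⟨Iso.refl _⟩⟩)
    · exact mem_of_cycleG_mem_generates hS (hT n hn) (hgen ▸ mem_generates ⟨n, hn, ⟨Iso.refl _⟩⟩)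
end

section
/- Every closed class of finite graphs has a unique elemental basis, namely the set of those graphs in the class that cannot be obtained as the result of any nontrivial gluing operation applied to two graphs of the class. -/
/-- The graphs of `C` which cannot be obtained as the result of any nontrivial
gluing operation applied to two graphs of `C`. -/
def Irreducibles (C : Set MultiGraph) : Set MultiGraph :=
  {G | G ∈ C ∧ ¬ ∃ G₁ ∈ C, ∃ G₂ ∈ C, ∃ Gt, IsNontrivialGluing G G₁ G₂ Gt}

section Aux

open Function

/-- The identity isomorphism. -/
def Iso.refl' (G : MultiGraph) : Iso G G :=
  ⟨⟨id, id, injective_id, injective_id, fun e => by simp [Sym2.map_id]⟩,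
    surjective_id, surjective_id⟩

/-- Composition of embeddings. -/
def Emb.comp' {G H K : MultiGraph} (f : Emb G H) (g : Emb H K) : Emb G K :=
  ⟨g.vmap ∘ f.vmap, g.emap ∘ f.emap, g.vinj.comp f.vinj, g.einj.comp f.einj,
    fun e => by simp [g.ends_eq, f.ends_eq, Sym2.map_map]⟩

/-- Inverse of an isomorphism. -/
noncomputable def Iso.symm' {G H : MultiGraph} (i : Iso G H) : Iso H G := by
  classical
  let ev : G.V ≃ H.V := Equiv.ofBijective i.vmap ⟨i.vinj, i.vsurj⟩
  let ee : G.E ≃ H.E := Equiv.ofBijective i.emap ⟨i.einj, i.esurj⟩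
  refine ⟨⟨ev.symm, ee.symm, ev.symm.injective, ee.symm.injective, fun e => ?_⟩,
    ev.symm.surjective, ee.symm.surjective⟩
  have h := i.ends_eq (ee.symm e)
  have hev : i.vmap = ev := rfl
  have : ee (ee.symm e) = e := ee.apply_symm_apply e
  have h2 : H.ends e = (G.ends (ee.symm e)).map ev := by
    rw [← hev]
    calc H.ends e = H.ends (i.emap (ee.symm e)) := by
          congr 1; exact (ee.apply_symm_apply e).symm
      _ = (G.ends (ee.symm e)).map i.vmap := i.ends_eq _
  rw [h2, Sym2.map_map]
  have : (⇑ev.symm ∘ ⇑ev) = id := by funext x; simp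
  rw [this, Sym2.map_id, id]

/-- Transport a gluing structure along an isomorphism of the result. -/
lemma glueAt_comp_iso {G G' G₁ G₂ Gt : MultiGraph} {j₁ : Emb Gt G₁} {j₂ : Emb Gt G₂}
    {f₁ : Emb G₁ G} {f₂ : Emb G₂ G} (hg : GlueAt G G₁ G₂ Gt j₁ j₂ f₁ f₂) (i : Iso G G') :
    GlueAt G' G₁ G₂ Gt j₁ j₂ (f₁.comp' i.toEmb) (f₂.comp' i.toEmb) := by
  obtain ⟨h1, h2, h3, h4, h5, h6⟩ := hg
  refine ⟨fun x => congrArg i.vmap (h1 x), fun e => congrArg i.emap (h2 e), ?_, ?_, ?_, ?_⟩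
  · intro v
    obtain ⟨w, rfl⟩ := i.vsurj v
    rcases h3 w with ⟨a, ha⟩ | ⟨b, hb⟩
    · exact Or.inl ⟨a, congrArg i.vmap ha⟩
    · exact Or.inr ⟨b, congrArg i.vmap hb⟩
  · intro e
    obtain ⟨w, rfl⟩ := i.esurj e
    rcases h4 w with ⟨a, ha⟩ | ⟨b, hb⟩
    · exact Or.inl ⟨a, congrArg i.emap ha⟩
    · exact Or.inr ⟨b, congrArg i.emap hb⟩
  · exact fun a b hab => h5 a b (i.vinj hab)
  · exact fun a b hab => h6 a b (i.einj hab)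

/-- Transport a nontrivial-gluing witness along an isomorphism of the result. -/
lemma nontrivialGluing_iso {G G' G₁ G₂ Gt : MultiGraph}
    (h : IsNontrivialGluing G G₁ G₂ Gt) (i : Iso G G') : IsNontrivialGluing G' G₁ G₂ Gt := by
  obtain ⟨j₁, j₂, f₁, f₂, hg, hn₁, hn₂⟩ := h
  exact ⟨j₁, j₂, f₁.comp' i.toEmb, f₂.comp' i.toEmb, glueAt_comp_iso hg i, hn₁, hn₂⟩

/-- The irreducibles of a closed class form an isomorphism-closed set. -/
lemma irred_isoClosed {C : Set MultiGraph} (hC : ClosedClass C) :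
    IsoClosed (Irreducibles C) := by
  rintro G H ⟨hGC, hGn⟩ i
  refine ⟨hC.1 G H hGC i, ?_⟩
  rintro ⟨G₁, h₁, G₂, h₂, Gt, hnt⟩
  exact hGn ⟨G₁, h₁, G₂, h₂, Gt, nontrivialGluing_iso hnt (Iso.symm' i)⟩

/-- Everything generated from a subset of a closed class lies in the class. -/
lemma generates_subset_of {B C : Set MultiGraph} (hC : ClosedClass C) (hB : B ⊆ C) :
    ∀ G, GeneratesW B Set.univ G → G ∈ C := by
  intro G h
  induction h with
  | base hH i => exact hC.1 _ _ (hB hH) i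
  | glue _ _ _ hg ih1 ih2 => exact hC.2 _ _ _ _ ih1 ih2 hg

/-- Combined size of a multigraph. -/
noncomputable def msize (G : MultiGraph) : ℕ := Fintype.card G.V + Fintype.card G.E

lemma size_lt_left {G G₁ G₂ Gt : MultiGraph} {j₁ : Emb Gt G₁} {j₂ : Emb Gt G₂}
    {f₁ : Emb G₁ G} {f₂ : Emb G₂ G} (hg : GlueAt G G₁ G₂ Gt j₁ j₂ f₁ f₂)
    (hn : ¬ (Function.Surjective j₂.vmap ∧ Function.Surjective j₂.emap)) :
    msize G₁ < msize G := by
  obtain ⟨h1, h2, h3, h4, h5, h6⟩ := hg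
  have hv : Fintype.card G₁.V ≤ Fintype.card G.V := Fintype.card_le_of_injective _ f₁.vinj
  have he : Fintype.card G₁.E ≤ Fintype.card G.E := Fintype.card_le_of_injective _ f₁.einj
  rw [not_and_or] at hn
  rcases hn with hn | hn
  · obtain ⟨b, hb⟩ := not_forall.mp hn
    have : Fintype.card G₁.V < Fintype.card G.V := by
      refine Fintype.card_lt_of_injective_of_notMem _ f₁.vinj (b := f₂.vmap b) ?_
      rintro ⟨a, ha⟩
      obtain ⟨x, hx1, hx2⟩ := h5 a b ha
      exact hb ⟨x, hx2⟩
    unfold msize; omega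
  · obtain ⟨b, hb⟩ := not_forall.mp hn
    have : Fintype.card G₁.E < Fintype.card G.E := by
      refine Fintype.card_lt_of_injective_of_notMem _ f₁.einj (b := f₂.emap b) ?_
      rintro ⟨a, ha⟩
      obtain ⟨x, hx1, hx2⟩ := h6 a b ha
      exact hb ⟨x, hx2⟩
    unfold msize; omega

lemma size_lt_right {G G₁ G₂ Gt : MultiGraph} {j₁ : Emb Gt G₁} {j₂ : Emb Gt G₂}
    {f₁ : Emb G₁ G} {f₂ : Emb G₂ G} (hg : GlueAt G G₁ G₂ Gt j₁ j₂ f₁ f₂)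
    (hn : ¬ (Function.Surjective j₁.vmap ∧ Function.Surjective j₁.emap)) :
    msize G₂ < msize G := by
  obtain ⟨h1, h2, h3, h4, h5, h6⟩ := hg
  have hv : Fintype.card G₂.V ≤ Fintype.card G.V := Fintype.card_le_of_injective _ f₂.vinj
  have he : Fintype.card G₂.E ≤ Fintype.card G.E := Fintype.card_le_of_injective _ f₂.einj
  rw [not_and_or] at hn
  rcases hn with hn | hn
  · obtain ⟨a, ha⟩ := not_forall.mp hn
    have : Fintype.card G₂.V < Fintype.card G.V := by
      refine Fintype.card_lt_of_injective_of_notMem _ f₂.vinj (b := f₁.vmap a) ?_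
      rintro ⟨b, hb⟩
      obtain ⟨x, hx1, hx2⟩ := h5 a b hb.symm
      exact ha ⟨x, hx1⟩
    unfold msize; omega
  · obtain ⟨a, ha⟩ := not_forall.mp hn
    have : Fintype.card G₂.E < Fintype.card G.E := by
      refine Fintype.card_lt_of_injective_of_notMem _ f₂.einj (b := f₁.emap a) ?_
      rintro ⟨b, hb⟩
      obtain ⟨x, hx1, hx2⟩ := h6 a b hb.symm
      exact ha ⟨x, hx1⟩
    unfold msize; omega

/-- Every graph in a closed class is generated by the irreducibles. -/
lemma mem_generates_irred {C : Set MultiGraph} (hC : ClosedClass C) :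
    ∀ G, G ∈ C → GeneratesW (Irreducibles C) Set.univ G := by
  have key : ∀ n G, msize G < n → G ∈ C → GeneratesW (Irreducibles C) Set.univ G := by
    intro n
    induction n with
    | zero => intro G h; omega
    | succ n ih =>
      intro G hlt hG
      by_cases hirr : G ∈ Irreducibles C
      · exact GeneratesW.base hirr (Iso.refl' G)
      · have : ∃ G₁ ∈ C, ∃ G₂ ∈ C, ∃ Gt, IsNontrivialGluing G G₁ G₂ Gt := by
          by_contra h
          exact hirr ⟨hG, h⟩
        obtain ⟨G₁, h₁, G₂, h₂, Gt, j₁, j₂, f₁, f₂, hg, hn₁, hn₂⟩ := this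
        have s₁ := size_lt_left hg hn₂
        have s₂ := size_lt_right hg hn₁
        exact GeneratesW.glue (ih G₁ (by omega) h₁) (ih G₂ (by omega) h₂)
          trivial ⟨j₁, j₂, f₁, f₂, hg⟩
  exact fun G hG => key (msize G + 1) G (by omega) hG

/-- Any irreducible graph generated from an iso-closed subset of `C` lies in that subset. -/
lemma gen_irred_mem {C B' : Set MultiGraph} (hC : ClosedClass C) (hB'C : B' ⊆ C)
    (hB'iso : IsoClosed B') :
    ∀ G, GeneratesW B' Set.univ G → G ∈ Irreducibles C → G ∈ B' := by
  intro G h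
  induction h with
  | base hH i => exact fun _ => hB'iso _ _ hH i
  | @glue G G₁ G₂ Gt h1 h2 ht hg ih1 ih2 =>
    intro hGirr
    obtain ⟨j₁, j₂, f₁, f₂, hglue⟩ := hg
    have hG₁C : G₁ ∈ C := generates_subset_of hC hB'C G₁ h1
    have hG₂C : G₂ ∈ C := generates_subset_of hC hB'C G₂ h2
    by_cases hj₁ : Function.Surjective j₁.vmap ∧ Function.Surjective j₁.emap
    · -- `f₂` is an isomorphism `G₂ ≃ G`
      have hv : Function.Surjective f₂.vmap := by
        intro v
        rcases hglue.2.2.1 v with ⟨a, ha⟩ | ⟨b, hb⟩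
        · obtain ⟨x, rfl⟩ := hj₁.1 a
          exact ⟨j₂.vmap x, by rw [← hglue.1, ha]⟩
        · exact ⟨b, hb⟩
      have he : Function.Surjective f₂.emap := by
        intro e
        rcases hglue.2.2.2.1 e with ⟨a, ha⟩ | ⟨b, hb⟩
        · obtain ⟨x, rfl⟩ := hj₁.2 a
          exact ⟨j₂.emap x, by rw [← hglue.2.1, ha]⟩
        · exact ⟨b, hb⟩
      have i : Iso G₂ G := ⟨f₂, hv, he⟩
      have hG₂irr : G₂ ∈ Irreducibles C := irred_isoClosed hC G G₂ hGirr (Iso.symm' i)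
      exact hB'iso _ _ (ih2 hG₂irr) i
    · by_cases hj₂ : Function.Surjective j₂.vmap ∧ Function.Surjective j₂.emap
      · have hv : Function.Surjective f₁.vmap := by
          intro v
          rcases hglue.2.2.1 v with ⟨a, ha⟩ | ⟨b, hb⟩
          · exact ⟨a, ha⟩
          · obtain ⟨x, rfl⟩ := hj₂.1 b
            exact ⟨j₁.vmap x, by rw [hglue.1, hb]⟩
        have he : Function.Surjective f₁.emap := by
          intro e
          rcases hglue.2.2.2.1 e with ⟨a, ha⟩ | ⟨b, hb⟩
          · exact ⟨a, ha⟩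
          · obtain ⟨x, rfl⟩ := hj₂.2 b
            exact ⟨j₁.emap x, by rw [hglue.2.1, hb]⟩
        have i : Iso G₁ G := ⟨f₁, hv, he⟩
        have hG₁irr : G₁ ∈ Irreducibles C := irred_isoClosed hC G G₁ hGirr (Iso.symm' i)
        exact hB'iso _ _ (ih1 hG₁irr) i
      · exact absurd ⟨G₁, hG₁C, G₂, hG₂C, Gt, j₁, j₂, f₁, f₂, hglue, hj₁, hj₂⟩ hGirr.2

end Aux

/-- Every closed class of finite graphs has a unique elemental basis, namely the
set of its graphs not obtainable by a nontrivial gluing of graphs of the class. -/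
theorem elemental_basis_unique (C : Set MultiGraph) (hC : ClosedClass C) :
    ElementalBasis C (Irreducibles C) ∧
    ∀ B, ElementalBasis C B → B = Irreducibles C := by
  have hsub : Irreducibles C ⊆ C := fun G hG => hG.1
  have hiso : IsoClosed (Irreducibles C) := irred_isoClosed hC
  have hgen : Generates (Irreducibles C) = C := by
    ext G
    exact ⟨fun h => generates_subset_of hC hsub G h, fun h => mem_generates_irred hC G h⟩
  have hmin : ∀ B' ⊆ Irreducibles C, IsoClosed B' → Generates B' = C → B' = Irreducibles C := by
    intro B' hB' hB'iso hB'gen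
    apply Set.Subset.antisymm hB'
    intro G hG
    have : GeneratesW B' Set.univ G := by
      have : G ∈ Generates B' := hB'gen ▸ hG.1
      exact this
    exact gen_irred_mem hC (hB'.trans hsub) hB'iso G this hG
  refine ⟨⟨hsub, hiso, hgen, hmin⟩, ?_⟩
  rintro B ⟨hBC, hBiso, hBgen, hBmin⟩
  have hIB : Irreducibles C ⊆ B := by
    intro G hG
    have : G ∈ Generates B := hBgen ▸ hG.1
    exact gen_irred_mem hC hBC hBiso G this hG
  exact (hBmin (Irreducibles C) hIB hiso hgen).symm
end
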